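/- arXiv:2310.16707 — 3 statements merged into one kernel-verified Lean document; each statement's English description precedes it below -/
import Mathlib

section
/- Let (E, ‖·‖) be a normed vector space, D ⊆ E, and let S : [0,∞) × D → D be a semigroup, i.e. S_0 w = w and S_s(S_t w) = S_{s+t} w for all w ∈ D, s,t ≥ 0, satisfying the Lipschitz estimate ‖S_t u − S_s v‖ ≤ L·‖u − v‖ + L'·|t − s| for all u,v ∈ D and s,t ≥ 0, with constants L, L'. Then for every Lipschitz continuous map w : [0,T] → D one has ‖ w(T) − S_T w(0) ‖ ≤ L · ∫₀ᵀ ( liminf_{h→0+} ‖ w(t+h) − S_h w(t) ‖ / h ) dt. -/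
/-!
Compare `w` with the orbits of the semigroup through it:
`G t = ‖S (T - t) (w t) - S T (w 0)‖` (`flowGap S w T t`) vanishes at `0`, equals the left-hand
side at `T`, and is Lipschitz on `[0, T]`. Factoring `S (T - t) = S (T - t - h) ∘ S h`, the
Lipschitz estimate gives `G (t + h) - G t ≤ L * ‖w (t + h) - S h (w t)‖`, so
`G' ≤ L * (error rate)` almost everywhere and the fundamental theorem of calculus for Lipschitz
functions concludes. The error rate is integrable: after extending `w` constantly outside
`[0, T]` it is a countable supremum, over rational `h₀ > 0`, of infima over `h ∈ (0, h₀)` of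
continuous functions of `t`, hence Borel, and it is bounded by `K + L'`. If `D` is a single point
both sides vanish; otherwise `L ≥ 1`.
-/

open MeasureTheory Filter Set Topology
open scoped NNReal

theorem measurable_liminf_nhdsGT {X : Type*} [TopologicalSpace X] [MeasurableSpace X]
    [OpensMeasurableSpace X] {f : ℝ → X → ℝ} {a c : ℝ}
    (hf : ∀ h, a < h → Continuous (f h)) (hc : ∀ h, a < h → ∀ x, c ≤ f h x) :
    Measurable fun x => liminf (f · x) (𝓝[>] a) := by
  have hbasis : (𝓝[>] a).HasBasis (fun q : ℚ => a < q) (fun q => Ioo a q) :=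
    (nhdsGT_basis a).to_hasBasis
      (fun b hb => let ⟨q, hq⟩ := exists_rat_btwn hb; ⟨q, hq.1, Ioo_subset_Ioo_right hq.2.le⟩)
      (fun q hq => ⟨q, hq, subset_rfl⟩)
  have hbdd (x : X) (q : {q : ℚ // a < q}) : BddBelow (range fun i : Ioo a (q : ℝ) => f i x) :=
    ⟨c, by rintro _ ⟨i, rfl⟩; exact hc i i.2.1 x⟩
  obtain ⟨q₀, hq₀, -⟩ := exists_rat_btwn (lt_add_one a)
  have : Nonempty {q : ℚ // a < q} := ⟨⟨q₀, hq₀⟩⟩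
  have hrepr (x : X) :
      liminf (f · x) (𝓝[>] a) = ⨆ q : {q : ℚ // a < q}, ⨅ i : Ioo a (q : ℝ), f i x := by
    rw [hbasis.liminf_eq_ciSup_ciInf (fun q => nonempty_Ioo.2 q.2) ⟨⟨q₀, hq₀⟩, hbdd x _⟩]
    have hreparam (q) : liminfReparam (f · x) (fun q : ℚ => Ioo a q) (a < ·) q = q :=
      if_pos (hbdd x q)
    congr 1 with q
    rw [hreparam]
  simp_rw [hrepr]
  exact Measurable.iSup fun q => UpperSemicontinuous.measurable <|
    upperSemicontinuous_ciInf (hbdd · q) fun i => (hf i i.2.1).upperSemicontinuous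

theorem le_const_mul_liminf_of_tendsto {α : Type*} {l : Filter α} [l.NeBot] {u v : α → ℝ}
    {a c : ℝ} (hc : 0 ≤ c) (hu : Tendsto u l (𝓝 a)) (huv : ∀ᶠ x in l, u x ≤ c * v x)
    (hv : IsBoundedUnder (· ≤ ·) l v) (hv' : IsBoundedUnder (· ≥ ·) l v) :
    a ≤ c * liminf v l := by
  have hcv : IsBoundedUnder (· ≤ ·) l (fun x => c * v x) :=
    hv.comp fun _ _ h => mul_le_mul_of_nonneg_left h hc
  rw [(monotone_mul_left_of_nonneg hc).map_liminf_of_continuousAt v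
    (continuous_const_mul c).continuousAt hv.isCoboundedUnder_ge hv', ← hu.liminf_eq]
  exact liminf_le_liminf huv hu.isBoundedUnder_ge hcv.isCoboundedUnder_ge

section Semigroup

variable {E : Type*} [NormedAddCommGroup E]

structure IsLipschitzSemigroup (D : Set E) (S : ℝ → E → E) (L L' : ℝ) : Prop where
  mapsTo : ∀ t, 0 ≤ t → MapsTo (S t) D D
  zero_apply : ∀ u ∈ D, S 0 u = u
  comp_apply : ∀ s t, 0 ≤ s → 0 ≤ t → ∀ u ∈ D, S s (S t u) = S (s + t) u
  norm_sub_le : ∀ u ∈ D, ∀ v ∈ D, ∀ s t, 0 ≤ s → 0 ≤ t →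
    ‖S t u - S s v‖ ≤ L * ‖u - v‖ + L' * |t - s|

noncomputable def errorRate (S : ℝ → E → E) (w : ℝ → E) (t : ℝ) : ℝ :=
  liminf (fun h => ‖w (t + h) - S h (w t)‖ / h) (𝓝[>] 0)

def flowGap (S : ℝ → E → E) (w : ℝ → E) (T t : ℝ) : ℝ :=
  ‖S (T - t) (w t) - S T (w 0)‖

variable {D : Set E} {S : ℝ → E → E} {L L' : ℝ} {w : ℝ → E} {K : ℝ≥0} {T : ℝ}

theorem errorRate_congr {w' : ℝ → E} {a b t : ℝ} (hww' : EqOn w w' (Icc a b))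
    (ht : t ∈ Ico a b) : errorRate S w t = errorRate S w' t := by
  refine liminf_congr ?_
  filter_upwards [Ioo_mem_nhdsGT (sub_pos.2 ht.2)] with h hh
  rw [hww' ⟨ht.1, ht.2.le⟩, hww' ⟨by linarith [ht.1, hh.1], by linarith [hh.2]⟩]

@[simp]
theorem flowGap_zero : flowGap S w T 0 = 0 := by
  simp [flowGap]

namespace IsLipschitzSemigroup

theorem norm_apply_sub_apply_le (hS : IsLipschitzSemigroup D S L L') {u v : E} (hu : u ∈ D)
    (hv : v ∈ D) {t : ℝ} (ht : 0 ≤ t) : ‖S t u - S t v‖ ≤ L * ‖u - v‖ := by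
  simpa using hS.norm_sub_le u hu v hv t t ht ht

theorem norm_apply_sub_self_le (hS : IsLipschitzSemigroup D S L L') {u : E} (hu : u ∈ D)
    {t : ℝ} (ht : 0 ≤ t) : ‖S t u - u‖ ≤ L' * t := by
  simpa [hS.zero_apply u hu, abs_of_nonneg ht] using hS.norm_sub_le u hu u hu 0 t le_rfl ht

theorem lipschitzOnWith_apply (hS : IsLipschitzSemigroup D S L L') {t : ℝ} (ht : 0 ≤ t) :
    LipschitzOnWith L.toNNReal (S t) D :=
  LipschitzOnWith.of_dist_le_mul fun u hu v hv => by
    simpa only [dist_eq_norm] using (hS.norm_apply_sub_apply_le hu hv ht).trans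
      (mul_le_mul_of_nonneg_right (Real.le_coe_toNNReal L) (norm_nonneg _))

theorem one_le (hS : IsLipschitzSemigroup D S L L') (hD : D.Nontrivial) : 1 ≤ L := by
  obtain ⟨u, hu, v, hv, huv⟩ := hD
  have h := hS.norm_apply_sub_apply_le hu hv le_rfl
  rw [hS.zero_apply u hu, hS.zero_apply v hv] at h
  exact (le_mul_iff_one_le_left (norm_pos_iff.2 (sub_ne_zero.2 huv))).1 h

theorem norm_sub_apply_le_of_lipschitzOnWith (hS : IsLipschitzSemigroup D S L L') {s : Set ℝ}
    (hw : LipschitzOnWith K w s) (hwD : MapsTo w s D) {t h : ℝ} (ht : t ∈ s) (hth : t + h ∈ s)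
    (hh : 0 ≤ h) : ‖w (t + h) - S h (w t)‖ ≤ (K + L') * h :=
  calc ‖w (t + h) - S h (w t)‖ ≤ ‖w (t + h) - w t‖ + ‖S h (w t) - w t‖ := by
        rw [norm_sub_rev (S h _)]; exact norm_sub_le_norm_sub_add_norm_sub _ _ _
    _ ≤ K * h + L' * h := by
        gcongr
        · simpa [abs_of_nonneg hh] using hw.norm_sub_le hth ht
        · exact hS.norm_apply_sub_self_le (hwD ht) hh
    _ = (K + L') * h := by ring

theorem eventually_norm_sub_apply_div_mem_Icc (hS : IsLipschitzSemigroup D S L L') {s : Set ℝ}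
    (hw : LipschitzOnWith K w s) (hwD : MapsTo w s D) {t : ℝ} (ht : t ∈ s)
    (hs : ∀ᶠ h in 𝓝[>] 0, t + h ∈ s) :
    ∀ᶠ h in 𝓝[>] 0, ‖w (t + h) - S h (w t)‖ / h ∈ Icc 0 (K + L') := by
  filter_upwards [hs, self_mem_nhdsWithin] with h hth (hh : 0 < h)
  exact ⟨by positivity,
    (div_le_iff₀ hh).2 (hS.norm_sub_apply_le_of_lipschitzOnWith hw hwD ht hth hh.le)⟩

theorem errorRate_eq_zero_of_subsingleton (hS : IsLipschitzSemigroup D S L L')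
    (hD : D.Subsingleton) (hwD : MapsTo w (Icc 0 T) D) {t : ℝ} (ht : t ∈ Ico 0 T) :
    errorRate S w t = 0 := by
  refine (liminf_congr ?_).trans (liminf_const 0)
  filter_upwards [Ioo_mem_nhdsGT (sub_pos.2 ht.2)] with h hh
  rw [hD (hwD ⟨by linarith [ht.1, hh.1], by linarith [hh.2]⟩)
    (hS.mapsTo h hh.1.le (hwD (Ico_subset_Icc_self ht))), sub_self, norm_zero, zero_div]

theorem measurable_errorRate (hS : IsLipschitzSemigroup D S L L') (hw : LipschitzWith K w)
    (hwD : ∀ t, w t ∈ D) : Measurable (errorRate S w) :=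
  measurable_liminf_nhdsGT (c := 0)
    (fun h hh => ((hw.continuous.comp (continuous_add_const h)).sub
      ((hS.lipschitzOnWith_apply hh.le).continuousOn.comp_continuous hw.continuous hwD)).norm
        |>.div_const h)
    (fun h hh t => by positivity)

theorem errorRate_mem_Icc (hS : IsLipschitzSemigroup D S L L') (hw : LipschitzWith K w)
    (hwD : ∀ t, w t ∈ D) (t : ℝ) : errorRate S w t ∈ Icc 0 (K + L') := by
  have hmem := hS.eventually_norm_sub_apply_div_mem_Icc (hw.lipschitzOnWith (s := univ))
    (fun t _ => hwD t) (mem_univ t) (.of_forall fun _ => mem_univ _)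
  have hge := hmem.mono fun _ hh => hh.1
  have hle := hmem.mono fun _ hh => hh.2
  exact ⟨le_liminf_of_le (isBoundedUnder_of_eventually_le hle).isCoboundedUnder_ge hge,
    liminf_le_of_frequently_le hle.frequently (isBoundedUnder_of_eventually_ge hge)⟩

theorem intervalIntegrable_errorRate (hS : IsLipschitzSemigroup D S L L') (hT : 0 ≤ T)
    (hw : LipschitzOnWith K w (Icc 0 T)) (hwD : MapsTo w (Icc 0 T) D) :
    IntervalIntegrable (errorRate S w) volume 0 T := by
  set W := IccExtend hT ((Icc 0 T).domRestrict w)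
  have hWw : EqOn W w (Icc 0 T) := fun t ht => IccExtend_of_mem hT _ ht
  have hW : LipschitzWith K W := by
    show LipschitzWith K ((Icc 0 T).domRestrict w ∘ projIcc 0 T hT)
    simpa only [mul_one] using hw.to_restrict.comp (LipschitzWith.projIcc hT)
  have hWD (t : ℝ) : W t ∈ D := hwD (projIcc 0 T hT t).2
  have hint : IntervalIntegrable (errorRate S W) volume 0 T := by
    refine (intervalIntegrable_iff_integrableOn_Icc_of_le hT).2 <|
      Measure.integrableOn_of_bounded (M := K + L') measure_Icc_lt_top.ne
        (hS.measurable_errorRate hW hWD).aestronglyMeasurable (.of_forall fun t => ?_)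
    have := hS.errorRate_mem_Icc hW hWD t
    rw [Real.norm_of_nonneg this.1]
    exact this.2
  refine hint.congr_uIoo fun t ht => ?_
  rw [uIoo_of_le hT] at ht
  exact errorRate_congr hWw (Ioo_subset_Ico_self ht)

theorem flowGap_self (hS : IsLipschitzSemigroup D S L L') (hwT : w T ∈ D) :
    flowGap S w T T = ‖w T - S T (w 0)‖ := by
  rw [flowGap, sub_self, hS.zero_apply _ hwT]

theorem flowGap_add_sub_le (hS : IsLipschitzSemigroup D S L L') (hwD : MapsTo w (Icc 0 T) D)
    {t h : ℝ} (ht : 0 ≤ t) (hh : 0 ≤ h) (hth : t + h ≤ T) :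
    flowGap S w T (t + h) - flowGap S w T t ≤ L * ‖w (t + h) - S h (w t)‖ := by
  have hwt : w t ∈ D := hwD ⟨ht, by linarith⟩
  have hsplit : S (T - t) (w t) = S (T - (t + h)) (S h (w t)) := by
    rw [hS.comp_apply _ _ (by linarith) hh _ hwt]
    congr 1
    ring
  calc flowGap S w T (t + h) - flowGap S w T t
      ≤ ‖S (T - (t + h)) (w (t + h)) - S (T - t) (w t)‖ := by
        simpa only [flowGap, sub_sub_sub_cancel_right] using
          norm_sub_norm_le (S (T - (t + h)) (w (t + h)) - S T (w 0)) (S (T - t) (w t) - S T (w 0))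
    _ ≤ L * ‖w (t + h) - S h (w t)‖ := by
        rw [hsplit]
        exact hS.norm_apply_sub_apply_le (hwD ⟨by linarith, hth⟩) (hS.mapsTo h hh hwt)
          (by linarith)

theorem lipschitzOnWith_flowGap (hS : IsLipschitzSemigroup D S L L') (hL : 0 ≤ L)
    (hw : LipschitzOnWith K w (Icc 0 T)) (hwD : MapsTo w (Icc 0 T) D) :
    LipschitzOnWith (L * K + L').toNNReal (flowGap S w T) (Icc 0 T) :=
  LipschitzOnWith.of_dist_le_mul fun a ha b hb => by
    rw [Real.dist_eq, Real.dist_eq]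
    calc |flowGap S w T a - flowGap S w T b| ≤ ‖S (T - a) (w a) - S (T - b) (w b)‖ := by
          simpa only [flowGap, sub_sub_sub_cancel_right] using abs_norm_sub_norm_le
            (S (T - a) (w a) - S T (w 0)) (S (T - b) (w b) - S T (w 0))
      _ ≤ L * ‖w a - w b‖ + L' * |(T - a) - (T - b)| :=
          hS.norm_sub_le _ (hwD ha) _ (hwD hb) _ _ (sub_nonneg.2 hb.2) (sub_nonneg.2 ha.2)
      _ ≤ L * (K * |a - b|) + L' * |a - b| := by
          rw [sub_sub_sub_cancel_left, abs_sub_comm]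
          gcongr
          simpa only [Real.norm_eq_abs] using hw.norm_sub_le ha hb
      _ = (L * K + L') * |a - b| := by ring
      _ ≤ (L * K + L').toNNReal * |a - b| := by
          gcongr
          exact Real.le_coe_toNNReal _

theorem deriv_flowGap_le (hS : IsLipschitzSemigroup D S L L') (hL : 0 ≤ L)
    (hw : LipschitzOnWith K w (Icc 0 T)) (hwD : MapsTo w (Icc 0 T) D) {t : ℝ} (ht : t ∈ Ioo 0 T)
    (hdiff : DifferentiableAt ℝ (flowGap S w T) t) :
    deriv (flowGap S w T) t ≤ L * errorRate S w t := by
  have hnear : ∀ᶠ h in 𝓝[>] 0, t + h ∈ Icc 0 T := by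
    filter_upwards [Ioo_mem_nhdsGT (sub_pos.2 ht.2)] with h hh
    exact ⟨by linarith [ht.1, hh.1], by linarith [hh.2]⟩
  have hquot := hS.eventually_norm_sub_apply_div_mem_Icc hw hwD (Ioo_subset_Icc_self ht) hnear
  refine le_const_mul_liminf_of_tendsto hL
    (by simpa only [smul_eq_mul] using hdiff.hasDerivAt.tendsto_slope_zero_right) ?_
    (isBoundedUnder_of_eventually_le (hquot.mono fun _ h => h.2))
    (isBoundedUnder_of_eventually_ge (hquot.mono fun _ h => h.1))
  filter_upwards [hnear, self_mem_nhdsWithin] with h hth (hh : 0 < h)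
  rw [inv_mul_eq_div, mul_div_assoc']
  exact div_le_div_of_nonneg_right (hS.flowGap_add_sub_le hwD ht.1.le hh.le hth.2) hh.le

end IsLipschitzSemigroup

end Semigroup

theorem semigroup_error_estimate_general
    {E : Type*} [NormedAddCommGroup E]
    (D : Set E) (S : ℝ → E → E) (L L' : ℝ)
    (hmap : ∀ t : ℝ, 0 ≤ t → ∀ u ∈ D, S t u ∈ D)
    (hS0 : ∀ u ∈ D, S 0 u = u)
    (hsemi : ∀ s t : ℝ, 0 ≤ s → 0 ≤ t → ∀ u ∈ D, S s (S t u) = S (s + t) u)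
    (hLip : ∀ u ∈ D, ∀ v ∈ D, ∀ s t : ℝ, 0 ≤ s → 0 ≤ t →
      ‖S t u - S s v‖ ≤ L * ‖u - v‖ + L' * |t - s|)
    (T : ℝ) (hT : 0 ≤ T) (w : ℝ → E) (K : NNReal)
    (hw : LipschitzOnWith K w (Set.Icc 0 T))
    (hwD : ∀ t ∈ Set.Icc 0 T, w t ∈ D) :
    ‖w T - S T (w 0)‖ ≤
      L * ∫ t in (0:ℝ)..T,
        Filter.liminf (fun h : ℝ => ‖w (t + h) - S h (w t)‖ / h) (𝓝[>] 0) := by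
  have hS : IsLipschitzSemigroup D S L L' := ⟨hmap, hS0, hsemi, hLip⟩
  have hw0 : w 0 ∈ D := hwD 0 ⟨le_rfl, hT⟩
  have hwT : w T ∈ D := hwD T ⟨hT, le_rfl⟩
  rcases D.subsingleton_or_nontrivial with hD | hD
  · have hrate : EqOn (errorRate S w) 0 (uIoo 0 T) := fun t ht =>
      hS.errorRate_eq_zero_of_subsingleton hD hwD (Ioo_subset_Ico_self (uIoo_of_le hT ▸ ht))
    rw [hD hwT (hmap T hT _ hw0), sub_self, norm_zero]
    exact (mul_eq_zero_of_right L ((intervalIntegral.integral_congr_uIoo hrate).trans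
      intervalIntegral.integral_zero)).ge
  have hL : 0 ≤ L := zero_le_one.trans (hS.one_le hD)
  have hG := hS.lipschitzOnWith_flowGap hL hw hwD
  rw [← uIcc_of_le hT] at hG
  have hAC := hG.absolutelyContinuousOnInterval
  have hderiv : ∀ᵐ t ∂volume.restrict (Icc 0 T),
      deriv (flowGap S w T) t ≤ L * errorRate S w t := by
    rw [← Measure.restrict_congr_set Ioo_ae_eq_Icc, ae_restrict_iff' measurableSet_Ioo]
    filter_upwards [hAC.ae_differentiableAt] with t hdiff ht
    exact hS.deriv_flowGap_le hL hw hwD ht (hdiff (uIcc_of_le hT ▸ Ioo_subset_Icc_self ht))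
  calc ‖w T - S T (w 0)‖ = ∫ t in 0..T, deriv (flowGap S w T) t := by
        rw [hAC.integral_deriv_eq_sub, hS.flowGap_self hwT, flowGap_zero, sub_zero]
    _ ≤ ∫ t in 0..T, L * errorRate S w t :=
        intervalIntegral.integral_mono_ae_restrict hT hAC.intervalIntegrable_deriv
          ((hS.intervalIntegrable_errorRate hT hw hwD).const_mul L) hderiv
    _ = L * ∫ t in 0..T, errorRate S w t := intervalIntegral.integral_const_mul L _

/-- **Elementary error estimate for Lipschitz semigroups.**
Let `S` be a semigroup on `D ⊆ E` satisfying
`‖S_t u - S_s v‖ ≤ L ‖u - v‖ + L' |t - s|`.  Then for every Lipschitz continuous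
map `w : [0,T] → D`,
`‖w(T) - S_T w(0)‖ ≤ L ∫₀ᵀ liminf_{h→0+} ‖w(t+h) - S_h w(t)‖ / h dt`. -/
theorem semigroup_error_estimate
    {E : Type*} [NormedAddCommGroup E] [NormedSpace ℝ E]
    (D : Set E) (S : ℝ → E → E) (L L' : ℝ)
    (hmap : ∀ t : ℝ, 0 ≤ t → ∀ u ∈ D, S t u ∈ D)
    (hS0 : ∀ u ∈ D, S 0 u = u)
    (hsemi : ∀ s t : ℝ, 0 ≤ s → 0 ≤ t → ∀ u ∈ D, S s (S t u) = S (s + t) u)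
    (hLip : ∀ u ∈ D, ∀ v ∈ D, ∀ s t : ℝ, 0 ≤ s → 0 ≤ t →
      ‖S t u - S s v‖ ≤ L * ‖u - v‖ + L' * |t - s|)
    (T : ℝ) (hT : 0 ≤ T) (w : ℝ → E) (K : NNReal)
    (hw : LipschitzOnWith K w (Set.Icc 0 T))
    (hwD : ∀ t ∈ Set.Icc 0 T, w t ∈ D) :
    ‖w T - S T (w 0)‖ ≤
      L * ∫ t in (0:ℝ)..T,
        Filter.liminf (fun h : ℝ => ‖w (t + h) - S h (w t)‖ / h) (𝓝[>] 0) :=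
  semigroup_error_estimate_general D S L L' hmap hS0 hsemi hLip T hT w K hw hwD
end

section
/- Let u : [0,∞) × ℝ → ℝⁿ be such that the map t ↦ u(t,·) is Lipschitz continuous with values in L¹(ℝ;ℝⁿ). Suppose u has an approximate jump at a point (τ,ξ) with τ > 0: there exist u⁻ ≠ u⁺ in ℝⁿ and λ ∈ ℝ such that, setting U(t,x) = u⁻ for x < λt and U(t,x) = u⁺ for x > λt, one has lim_{r→0+} r⁻² ∫_{-r}^{r} ∫_{-r}^{r} |u(τ+t, ξ+x) − U(t,x)| dx dt = 0. Then lim_{h→0+} (1/h) ∫_{-h}^{h} | u(τ+h, ξ+x) − U(h,x) | dx = 0. -/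
/-!
Let `Ψ r t = ∫_{-r}^{r} |u(τ+t, ξ+x) - U(t,x)| dx`. Both `t ↦ u(t,·)` and `t ↦ U(t,·)` are
Lipschitz into `L¹` (the latter with constant `|u⁺ - u⁻| |λ|`, the measure of the region swept by
the jump), so near `t = 0` every `Ψ r` is `K`-Lipschitz with `K` independent of `r`. Hence
`Ψ h h ≤ Ψ (2h) h ≤ Ψ (2h) t + K δ h` for `t ∈ [h - δh, h]`; averaging over that interval gives
`Ψ h h / h ≤ (4/δ) (2h)⁻² ∫_{-2h}^{2h} Ψ (2h) t dt + K δ`. The first term tends to `0` by the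
approximate-jump hypothesis and `δ > 0` is arbitrary.
-/

open MeasureTheory Filter Set Topology
open scoped NNReal

section StepFunction

variable {E : Type*} [NormedAddCommGroup E] (um up : E)

theorem norm_ite_lt_sub_ite_lt (a b x : ℝ) :
    ‖(if x < a then um else up) - (if x < b then um else up)‖ =
      (Ico (min a b) (max a b)).indicator (fun _ => ‖um - up‖) x := by
  by_cases ha : x < a <;> by_cases hb : x < b <;>
    simp [ha, hb, norm_sub_rev, not_lt.1]

theorem intervalIntegrable_ite_lt (a c d : ℝ) :
    IntervalIntegrable (fun x : ℝ => if x < a then um else up) volume c d := by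
  rw [intervalIntegrable_iff]
  refine Measure.integrableOn_of_bounded (M := max ‖um‖ ‖up‖) measure_Ioc_lt_top.ne
    (stronglyMeasurable_const.ite measurableSet_Iio stronglyMeasurable_const).aestronglyMeasurable
    (ae_of_all _ fun x => ?_)
  split_ifs <;> simp

theorem integrable_ite_lt_sub_ite_lt (a b : ℝ) :
    Integrable fun x : ℝ => (if x < a then um else up) - (if x < b then um else up) := by
  have hstep : ∀ c : ℝ, StronglyMeasurable fun x : ℝ => if x < c then um else up := fun c =>
    stronglyMeasurable_const.ite measurableSet_Iio stronglyMeasurable_const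
  refine Integrable.mono' ((integrable_indicator_iff measurableSet_Ico).2
    (integrableOn_const measure_Ico_lt_top.ne)) ((hstep a).sub (hstep b)).aestronglyMeasurable
    (ae_of_all _ fun x => (norm_ite_lt_sub_ite_lt um up a b x).le)

theorem integral_norm_ite_lt_sub_ite_lt (a b : ℝ) :
    ∫ x : ℝ, ‖(if x < a then um else up) - (if x < b then um else up)‖ = ‖um - up‖ * |a - b| := by
  simp_rw [norm_ite_lt_sub_ite_lt]
  rw [integral_indicator_const _ measurableSet_Ico, Measure.real, Real.volume_Ico,
    ENNReal.toReal_ofReal (sub_nonneg.2 min_le_max), max_sub_min_eq_abs', smul_eq_mul, mul_comm]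

end StepFunction

theorem abs_intervalIntegral_norm_sub_le {E : Type*} [NormedAddCommGroup E] {μ : Measure ℝ}
    {f g : ℝ → E} {a b : ℝ} (hab : a ≤ b) (hf : IntervalIntegrable f μ a b)
    (hg : IntervalIntegrable g μ a b) (hfg : Integrable (fun x => f x - g x) μ) :
    |(∫ x in a..b, ‖f x‖ ∂μ) - ∫ x in a..b, ‖g x‖ ∂μ| ≤ ∫ x, ‖f x - g x‖ ∂μ := by
  rw [← intervalIntegral.integral_sub hf.norm hg.norm]
  calc _ ≤ ∫ x in a..b, |‖f x‖ - ‖g x‖| ∂μ := intervalIntegral.abs_integral_le_integral_abs hab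
    _ ≤ ∫ x in a..b, ‖f x - g x‖ ∂μ :=
      intervalIntegral.integral_mono_on hab (hf.norm.sub hg.norm).abs (hf.sub hg).norm
        fun x _ => abs_norm_sub_norm_le _ _
    _ ≤ ∫ x, ‖f x - g x‖ ∂μ := by
      rw [intervalIntegral.integral_of_le hab]
      exact setIntegral_le_integral hfg.norm (ae_of_all _ fun _ => norm_nonneg _)

theorem lipschitzOnWith_intervalIntegral_norm_sub_ite {E : Type*} [NormedAddCommGroup E]
    {u : ℝ → ℝ → E} {S : Set ℝ} {K : ℝ≥0} (hint : ∀ t ∈ S, Integrable (u t))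
    (hLip : ∀ s ∈ S, ∀ t ∈ S, ∫ x, ‖u t x - u s x‖ ≤ K * |t - s|)
    (um up : E) (lam : ℝ) {a b : ℝ} (hab : a ≤ b) :
    LipschitzOnWith (K + ‖um - up‖₊ * ‖lam‖₊)
      (fun t => ∫ x in a..b, ‖u t x - (if x < lam * t then um else up)‖) S := by
  refine LipschitzOnWith.of_dist_le_mul fun t ht s hs => ?_
  set U : ℝ → ℝ → E := fun t x => if x < lam * t then um else up
  have hU := integrable_ite_lt_sub_ite_lt um up (lam * t) (lam * s)
  rw [Real.dist_eq, Real.dist_eq]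
  calc _ ≤ ∫ x, ‖(u t x - U t x) - (u s x - U s x)‖ :=
        abs_intervalIntegral_norm_sub_le hab
          ((hint t ht).intervalIntegrable.sub (intervalIntegrable_ite_lt um up _ a b))
          ((hint s hs).intervalIntegrable.sub (intervalIntegrable_ite_lt um up _ a b))
          (by
            convert ((hint t ht).sub (hint s hs)).sub hU using 1
            ext x
            exact sub_sub_sub_comm _ _ _ _)
    _ ≤ ∫ x, (‖u t x - u s x‖ + ‖U t x - U s x‖) :=
        integral_mono_of_nonneg (ae_of_all _ fun _ => norm_nonneg _)
          (((hint t ht).sub (hint s hs)).norm.add hU.norm)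
          (ae_of_all _ fun x => by
            simp only [sub_sub_sub_comm (u t x)]; exact norm_sub_le _ _)
    _ = (∫ x, ‖u t x - u s x‖) + ∫ x, ‖U t x - U s x‖ :=
        integral_add ((hint t ht).sub (hint s hs)).norm hU.norm
    _ ≤ K * |t - s| + ‖um - up‖ * (|lam| * |t - s|) := by
        rw [integral_norm_ite_lt_sub_ite_lt, ← mul_sub, abs_mul]
        exact add_le_add_left (hLip s hs t ht) _
    _ = _ := by push_cast [Real.norm_eq_abs]; ring

theorem monotoneOn_intervalIntegral_neg_self {f : ℝ → ℝ} (hf₀ : 0 ≤ f)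
    (hf : ∀ r, IntervalIntegrable f volume (-r) r) :
    MonotoneOn (fun r => ∫ x in (-r)..r, f x) (Ici 0) := fun r hr r' _ hrr' =>
  intervalIntegral.integral_mono_interval (by linarith) (by linarith [mem_Ici.1 hr]) hrr'
    (ae_of_all _ hf₀) (hf r')

theorem mul_le_intervalIntegral_add_of_lipschitzOnWith {g : ℝ → ℝ} {K : ℝ≥0} {a b t₀ ℓ : ℝ}
    (hg : LipschitzOnWith K g (Icc a b)) (hg₀ : ∀ t ∈ Icc a b, 0 ≤ g t) (hℓ : 0 ≤ ℓ)
    (ha : a ≤ t₀ - ℓ) (hb : t₀ ≤ b) :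
    ℓ * g t₀ ≤ (∫ t in a..b, g t) + K * ℓ ^ 2 := by
  have hint : IntervalIntegrable g volume a b :=
    hg.continuousOn.intervalIntegrable_of_Icc (by linarith)
  have hint' : IntervalIntegrable g volume (t₀ - ℓ) t₀ := by
    refine hint.mono_set ?_
    rw [uIcc_of_le (by linarith), uIcc_of_le (by linarith)]
    exact Icc_subset_Icc ha hb
  have hg_near : ∀ t ∈ Icc (t₀ - ℓ) t₀, g t₀ - K * ℓ ≤ g t := by
    intro t ht
    have hdist := hg.dist_le_mul t₀ ⟨by linarith, hb⟩ t ⟨by linarith [ht.1], by linarith [ht.2]⟩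
    rw [Real.dist_eq, Real.dist_eq, abs_of_nonneg (show 0 ≤ t₀ - t by linarith [ht.2])] at hdist
    have : (K : ℝ) * (t₀ - t) ≤ K * ℓ := by gcongr; linarith [ht.1]
    linarith [le_abs_self (g t₀ - g t)]
  calc ℓ * g t₀ = (∫ _ in (t₀ - ℓ)..t₀, (g t₀ - K * ℓ)) + K * ℓ ^ 2 := by
        rw [intervalIntegral.integral_const, smul_eq_mul]; ring
    _ ≤ (∫ t in (t₀ - ℓ)..t₀, g t) + K * ℓ ^ 2 := by
        gcongr
        exact intervalIntegral.integral_mono_on (by linarith) intervalIntegrable_const hint' hg_near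
    _ ≤ (∫ t in a..b, g t) + K * ℓ ^ 2 := by
        gcongr
        exact intervalIntegral.integral_mono_interval ha (by linarith) hb
          ((ae_restrict_mem measurableSet_Ioc).mono fun t ht => hg₀ t (Ioc_subset_Icc_self ht))
          hint

theorem tendsto_one_div_mul_of_tendsto_average {Ψ : ℝ → ℝ → ℝ} {K : ℝ≥0}
    (hΨ₀ : ∀ r, 0 ≤ r → ∀ t, 0 ≤ Ψ r t) (hmono : ∀ t, MonotoneOn (Ψ · t) (Ici 0))
    (hlip : ∀ᶠ r in 𝓝[>] 0, LipschitzOnWith K (Ψ r) (Icc (-r) r))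
    (havg : Tendsto (fun r => (1 / r ^ 2) * ∫ t in (-r)..r, Ψ r t) (𝓝[>] 0) (𝓝 0)) :
    Tendsto (fun h => (1 / h) * Ψ h h) (𝓝[>] 0) (𝓝 0) := by
  set A : ℝ → ℝ := fun r => (1 / r ^ 2) * ∫ t in (-r)..r, Ψ r t
  have hbound : ∀ δ, 0 < δ → δ ≤ 1 →
      ∀ᶠ h in 𝓝[>] 0, (1 / h) * Ψ h h ≤ 4 / δ * A (2 * h) + K * δ := by
    intro δ hδ hδ1
    filter_upwards [self_mem_nhdsWithin, eventually_nhdsGT_zero_mul_left two_pos hlip]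
      with h (hh : 0 < h) hlip₂
    have hle := mul_le_intervalIntegral_add_of_lipschitzOnWith (t₀ := h) (ℓ := δ * h) hlip₂
      (fun t _ => hΨ₀ _ (by positivity) t) (by positivity) (by nlinarith) (by linarith)
    have hΨ : Ψ h h ≤ Ψ (2 * h) h := hmono h hh.le (mem_Ici.2 (by positivity)) (by linarith)
    have hδh : 0 < δ * h := by positivity
    simp only [A]
    rw [← sub_nonneg]
    have hdiff : 4 / δ * (1 / (2 * h) ^ 2 * ∫ t in (-(2 * h))..(2 * h), Ψ (2 * h) t) + K * δ
        - 1 / h * Ψ h h = ((∫ t in (-(2 * h))..(2 * h), Ψ (2 * h) t) + K * (δ * h) ^ 2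
        - δ * h * Ψ h h) / (δ * h ^ 2) := by
      field_simp; ring
    rw [hdiff]
    apply div_nonneg _ (by positivity)
    linarith [mul_le_mul_of_nonneg_left hΨ hδh.le]
  refine tendsto_order.2 ⟨fun a ha => ?_, fun ε hε => ?_⟩
  · filter_upwards [self_mem_nhdsWithin] with h (hh : 0 < h)
    exact ha.trans_le (mul_nonneg (by positivity) (hΨ₀ h hh.le h))
  · obtain ⟨δ, hδ, hKδ⟩ := exists_pos_mul_lt hε K
    have hδ' : (K : ℝ) * min δ 1 < ε :=
      (mul_le_mul_of_nonneg_left (min_le_left _ _) K.2).trans_lt hKδ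
    have htwo : Tendsto (2 * ·) (𝓝[>] (0 : ℝ)) (𝓝[>] 0) :=
      tendsto_iff_comap.2 (comap_mulLeft_nhdsGT_zero two_pos).ge
    have hlim : Tendsto (fun h => 4 / min δ 1 * A (2 * h) + K * min δ 1) (𝓝[>] 0)
        (𝓝 (4 / min δ 1 * 0 + K * min δ 1)) :=
      ((havg.comp htwo).const_mul _).add_const _
    rw [mul_zero, zero_add] at hlim
    filter_upwards [hbound _ (lt_min hδ one_pos) (min_le_right _ _),
      hlim.eventually_lt_const hδ'] with h h₁ h₂
    exact h₁.trans_lt h₂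

theorem approximate_jump_L1_limit_general
    {n : ℕ} (u : ℝ → ℝ → EuclideanSpace ℝ (Fin n))
    (hint : ∀ t : ℝ, Integrable (u t))
    (L : ℝ)
    (hLip : ∀ s t : ℝ, 0 ≤ s → 0 ≤ t →
      (∫ x : ℝ, ‖u t x - u s x‖) ≤ L * |t - s|)
    (τ ξ : ℝ) (hτ : 0 < τ)
    (um up : EuclideanSpace ℝ (Fin n)) (lam : ℝ)
    (hjump : Tendsto
      (fun r : ℝ => (1 / r ^ 2) *
        ∫ t in (-r)..r, ∫ x in (-r)..r,
          ‖u (τ + t) (ξ + x) - (if x < lam * t then um else up)‖)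
      (𝓝[>] 0) (𝓝 0)) :
    Tendsto
      (fun h : ℝ => (1 / h) *
        ∫ x in (-h)..h, ‖u (τ + h) (ξ + x) - (if x < lam * h then um else up)‖)
      (𝓝[>] 0) (𝓝 0) := by
  have hint_shift : ∀ t, Integrable fun x => u (τ + t) (ξ + x) := fun t =>
    (hint (τ + t)).comp_add_left ξ
  have hLip_shift : ∀ s ∈ Ici (-τ), ∀ t ∈ Ici (-τ),
      ∫ x, ‖u (τ + t) (ξ + x) - u (τ + s) (ξ + x)‖ ≤ L.toNNReal * |t - s| := by
    intro s hs t ht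
    calc ∫ x, ‖u (τ + t) (ξ + x) - u (τ + s) (ξ + x)‖ = ∫ x, ‖u (τ + t) x - u (τ + s) x‖ :=
          integral_add_left_eq_self (fun x => ‖u (τ + t) x - u (τ + s) x‖) ξ
      _ ≤ L * |τ + t - (τ + s)| :=
          hLip _ _ (by linarith [mem_Ici.1 hs]) (by linarith [mem_Ici.1 ht])
      _ ≤ L.toNNReal * |t - s| := by
          rw [add_sub_add_left_eq_sub]; gcongr; exact Real.le_coe_toNNReal L
  refine tendsto_one_div_mul_of_tendsto_average (K := L.toNNReal + ‖um - up‖₊ * ‖lam‖₊)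
    (Ψ := fun r t => ∫ x in (-r)..r, ‖u (τ + t) (ξ + x) - (if x < lam * t then um else up)‖)
    (fun r hr t => intervalIntegral.integral_nonneg (by linarith) fun _ _ => norm_nonneg _)
    (fun t => monotoneOn_intervalIntegral_neg_self (fun _ => norm_nonneg _)
      fun r => ((hint_shift t).intervalIntegrable.sub (intervalIntegrable_ite_lt um up _ _ _)).norm)
    ?_ hjump
  filter_upwards [Ioo_mem_nhdsGT hτ] with r hr
  exact (lipschitzOnWith_intervalIntegral_norm_sub_ite (u := fun t x => u (τ + t) (ξ + x))
    (fun t _ => hint_shift t) hLip_shift um up lam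
    (by linarith [hr.1])).mono fun t ht => by simp only [mem_Ici]; linarith [ht.1, hr.2]

/-- **L¹ comparison with the jump at a point of approximate jump.**
Let `t ↦ u(t,·)` be Lipschitz continuous with values in `L¹(ℝ;ℝⁿ)` and suppose `u`
has an approximate jump at `(τ,ξ)`, `τ > 0`, with states `u⁻ ≠ u⁺` and speed `λ`:
setting `U(t,x) = u⁻` for `x < λ t`, `U(t,x) = u⁺` for `x > λ t`, the averaged
double integral of `|u(τ+t,ξ+x) - U(t,x)|` over `[-r,r]²` divided by `r²` tends
to `0` as `r → 0+`.  Then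
`(1/h) ∫_{-h}^{h} |u(τ+h, ξ+x) - U(h,x)| dx → 0` as `h → 0+`. -/
theorem approximate_jump_L1_limit
    {n : ℕ} (u : ℝ → ℝ → EuclideanSpace ℝ (Fin n))
    (hmeas : Measurable (Function.uncurry u))
    (hint : ∀ t : ℝ, Integrable (u t))
    (L : ℝ)
    (hLip : ∀ s t : ℝ, 0 ≤ s → 0 ≤ t →
      (∫ x : ℝ, ‖u t x - u s x‖) ≤ L * |t - s|)
    (τ ξ : ℝ) (hτ : 0 < τ)
    (um up : EuclideanSpace ℝ (Fin n)) (hne : um ≠ up) (lam : ℝ)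
    (hjump : Tendsto
      (fun r : ℝ => (1 / r ^ 2) *
        ∫ t in (-r)..r, ∫ x in (-r)..r,
          ‖u (τ + t) (ξ + x) - (if x < lam * t then um else up)‖)
      (𝓝[>] 0) (𝓝 0)) :
    Tendsto
      (fun h : ℝ => (1 / h) *
        ∫ x in (-h)..h, ‖u (τ + h) (ξ + x) - (if x < lam * h then um else up)‖)
      (𝓝[>] 0) (𝓝 0) :=
  approximate_jump_L1_limit_general u hint L hLip τ ξ hτ um up lam hjump
end

section
/- Let f : ℝⁿ → ℝⁿ be twice continuously differentiable, let K ⊂ ℝⁿ be compact and convex, and let λ : K → ℝ and l : K → ℝⁿ be continuous maps satisfying l(u)·( Df(u) − λ(u) I ) = 0 for every u ∈ K (i.e. l(u) is a left eigenvector of the Jacobian Df(u) with eigenvalue λ(u)). Define F(u, u₁, u₂) = l(u) · [ ( f(u₁) − λ(u) u₁ ) − ( f(u₂) − λ(u) u₂ ) ]. Then there exists a constant C such that for all u, u₁, u₂ ∈ K: | F(u, u₁, u₂) | ≤ C · ( |u₁ − u| + |u₂ − u| ) · |u₁ − u₂|. -/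
open MeasureTheory Filter Set Topology
open scoped RealInnerProductSpace

/-!
Fix `u` and put `g(x) = l(u) · (f(x) - λ(u) x)`, so that `F(u, u₁, u₂) = g(u₁) - g(u₂)`.
The eigenvector relation says exactly that `Dg(u) = 0`, hence
`Dg(x) = l(u) ∘ (Df(x) - Df(u))`. Since `f` is `C²`, `Df` is Lipschitz on the compact convex
set `K`, and `l` is bounded there, so `‖Dg(x)‖ ≤ C ‖x - u‖`. On the segment `[u₁, u₂]` this is
at most `C (‖u₁ - u‖ + ‖u₂ - u‖)`, and the mean value inequality along the segment gives the
estimate.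
-/

theorem hasFDerivAt_comp_sub_smul_of_comp_fderiv_eq_smul
    {𝕜 E G : Type*} [NontriviallyNormedField 𝕜] [NormedAddCommGroup E] [NormedSpace 𝕜 E]
    [NormedAddCommGroup G] [NormedSpace 𝕜 G] {f : E → E} (φ : E →L[𝕜] G) {c : 𝕜} {u x : E}
    (heig : φ.comp (fderiv 𝕜 f u) = c • φ) (hf : DifferentiableAt 𝕜 f x) :
    HasFDerivAt (fun y => φ (f y - c • y)) (φ.comp (fderiv 𝕜 f x - fderiv 𝕜 f u)) x := by
  refine (φ.hasFDerivAt.comp x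
    (hf.hasFDerivAt.sub ((hasFDerivAt_id x).const_smul c))).congr_fderiv ?_
  rw [ContinuousLinearMap.comp_sub, ContinuousLinearMap.comp_sub, heig,
    ContinuousLinearMap.comp_smul, ContinuousLinearMap.comp_id]

variable {E G : Type*} [NormedAddCommGroup E] [NormedSpace ℝ E]
  [NormedAddCommGroup G] [NormedSpace ℝ G]

theorem norm_sub_le_add_of_mem_segment {a b x : E} (hx : x ∈ segment ℝ a b) (u : E) :
    ‖x - u‖ ≤ ‖a - u‖ + ‖b - u‖ := by
  have hball : segment ℝ a b ⊆ Metric.closedBall u (max ‖a - u‖ ‖b - u‖) :=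
    (convex_closedBall _ _).segment_subset (by simp [dist_eq_norm]) (by simp [dist_eq_norm])
  have hxu : ‖x - u‖ ≤ max ‖a - u‖ ‖b - u‖ := by
    simpa [dist_eq_norm] using hball hx
  exact hxu.trans (max_le_add_of_nonneg (norm_nonneg _) (norm_nonneg _))

theorem Convex.norm_image_sub_le_of_norm_hasFDerivWithin_le_mul_norm_sub
    {g : E → G} {g' : E → E →L[ℝ] G} {s : Set E} (hs : Convex ℝ s)
    (hg : ∀ x ∈ s, HasFDerivWithinAt g (g' x) s x) {L : ℝ} (hL : 0 ≤ L) {u : E}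
    (bound : ∀ x ∈ s, ‖g' x‖ ≤ L * ‖x - u‖) {u₁ u₂ : E} (hu₁ : u₁ ∈ s) (hu₂ : u₂ ∈ s) :
    ‖g u₁ - g u₂‖ ≤ L * ((‖u₁ - u‖ + ‖u₂ - u‖) * ‖u₁ - u₂‖) := by
  have hseg : segment ℝ u₂ u₁ ⊆ s := hs.segment_subset hu₂ hu₁
  rw [← mul_assoc]
  refine (convex_segment u₂ u₁).norm_image_sub_le_of_norm_hasFDerivWithin_le
    (fun x hx => (hg x (hseg hx)).mono hseg) (fun x hx => ?_)
    (left_mem_segment ℝ _ _) (right_mem_segment ℝ _ _)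
  calc ‖g' x‖ ≤ L * ‖x - u‖ := bound x (hseg hx)
    _ ≤ L * (‖u₁ - u‖ + ‖u₂ - u‖) := by
      rw [add_comm]
      gcongr
      exact norm_sub_le_add_of_mem_segment hx u

theorem quadratic_flux_estimate_general
    {n : ℕ} (f : EuclideanSpace ℝ (Fin n) → EuclideanSpace ℝ (Fin n))
    (hf : ContDiff ℝ 2 f)
    (K : Set (EuclideanSpace ℝ (Fin n))) (hK : IsCompact K) (hKconv : Convex ℝ K)
    (lam : EuclideanSpace ℝ (Fin n) → ℝ)
    (l : EuclideanSpace ℝ (Fin n) → EuclideanSpace ℝ (Fin n))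
    (hl : ContinuousOn l K)
    (heig : ∀ u ∈ K, ∀ w : EuclideanSpace ℝ (Fin n),
      ⟪l u, fderiv ℝ f u w⟫ = lam u * ⟪l u, w⟫) :
    ∃ C : ℝ, ∀ u ∈ K, ∀ u₁ ∈ K, ∀ u₂ ∈ K,
      |⟪l u, (f u₁ - lam u • u₁) - (f u₂ - lam u • u₂)⟫| ≤
        C * ((‖u₁ - u‖ + ‖u₂ - u‖) * ‖u₁ - u₂‖) := by
  obtain ⟨L, hDf⟩ := (hf.fderiv_right (m := 1) (by norm_num)).contDiffOn.exists_lipschitzOnWith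
    one_ne_zero hKconv hK
  obtain ⟨M, hM⟩ := hK.exists_bound_of_continuousOn hl
  refine ⟨M * L, fun u hu u₁ hu₁ u₂ hu₂ => ?_⟩
  have hM0 : 0 ≤ M := (norm_nonneg _).trans (hM u hu)
  have heig_u : (innerSL ℝ (l u)).comp (fderiv ℝ f u) = lam u • innerSL ℝ (l u) := by
    ext w
    simpa using heig u hu w
  have bound : ∀ x ∈ K,
      ‖(innerSL ℝ (l u)).comp (fderiv ℝ f x - fderiv ℝ f u)‖ ≤ M * L * ‖x - u‖ := fun x hx =>
    calc _ ≤ ‖l u‖ * ‖fderiv ℝ f x - fderiv ℝ f u‖ :=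
          (ContinuousLinearMap.opNorm_comp_le _ _).trans_eq (by rw [innerSL_apply_norm])
      _ ≤ M * (L * ‖x - u‖) := by
          gcongr
          exacts [hM u hu, by simpa [dist_eq_norm] using hDf.dist_le_mul x hx u hu]
      _ = M * L * ‖x - u‖ := by ring
  rw [inner_sub_right, ← Real.norm_eq_abs]
  exact hKconv.norm_image_sub_le_of_norm_hasFDerivWithin_le_mul_norm_sub
    (fun x _ => (hasFDerivAt_comp_sub_smul_of_comp_fderiv_eq_smul _ heig_u
      (hf.differentiable (by norm_num) x)).hasFDerivWithinAt)
    (mul_nonneg hM0 L.2) bound hu₁ hu₂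

/-- **Quadratic smallness of the flux functional `F`.**
Let `f` be twice continuously differentiable, `K ⊂ ℝⁿ` compact and convex, and let
`λ : K → ℝ`, `l : K → ℝⁿ` be continuous with `l(u)·(Df(u) - λ(u) I) = 0` on `K`
(`l(u)` is a left eigenvector of `Df(u)` with eigenvalue `λ(u)`).  Setting
`F(u,u₁,u₂) = l(u) · [(f(u₁) - λ(u) u₁) - (f(u₂) - λ(u) u₂)]`, there is a constant
`C` with `|F(u,u₁,u₂)| ≤ C (|u₁ - u| + |u₂ - u|) |u₁ - u₂|` for all `u,u₁,u₂ ∈ K`. -/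
theorem quadratic_flux_estimate
    {n : ℕ} (f : EuclideanSpace ℝ (Fin n) → EuclideanSpace ℝ (Fin n))
    (hf : ContDiff ℝ 2 f)
    (K : Set (EuclideanSpace ℝ (Fin n))) (hK : IsCompact K) (hKconv : Convex ℝ K)
    (lam : EuclideanSpace ℝ (Fin n) → ℝ)
    (l : EuclideanSpace ℝ (Fin n) → EuclideanSpace ℝ (Fin n))
    (hlam : ContinuousOn lam K) (hl : ContinuousOn l K)
    (heig : ∀ u ∈ K, ∀ w : EuclideanSpace ℝ (Fin n),
      ⟪l u, fderiv ℝ f u w⟫ = lam u * ⟪l u, w⟫) :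
    ∃ C : ℝ, ∀ u ∈ K, ∀ u₁ ∈ K, ∀ u₂ ∈ K,
      |⟪l u, (f u₁ - lam u • u₁) - (f u₂ - lam u • u₂)⟫| ≤
        C * ((‖u₁ - u‖ + ‖u₂ - u‖) * ‖u₁ - u₂‖) :=
  quadratic_flux_estimate_general f hf K hK hKconv lam l hl heig
end
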